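/- arXiv:2501.10591 — 2 statements merged into one kernel-verified Lean document; each statement's English description precedes it below -/
import Mathlib

section
/- Let V be a 2-dimensional real inner product space and 𝔸 : V → V a self-adjoint endomorphism with trace zero. Define the symmetric bilinear form h on V by h(v, w) := 2⟨𝔸v, w⟩ + (1 − det 𝔸)⟨v, w⟩. Then for all v, w ∈ V, ⟨(id + 𝔸)v, (id + 𝔸)w⟩ = h(v, w); in particular, id + 𝔸 maps h-unit vectors to ⟨·,·⟩-unit vectors. -/
/-!
By Cayley–Hamilton in dimension two, a trace-free `A` satisfies `A² = -(det A) • id`. For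
self-adjoint `A` this gives `⟪A v, A w⟫ = ⟪v, A² w⟫ = -(det A) ⟪v, w⟫`, and expanding
`⟪v + A v, w + A w⟫` yields `h v w`.
-/

open scoped RealInnerProductSpace

open Polynomial in
theorem LinearMap.charpoly_of_finrank_eq_two {R M : Type*} [CommRing R] [Nontrivial R]
    [AddCommGroup M] [Module R M] [Module.Free R M] [Module.Finite R M]
    (hM : Module.finrank R M = 2) (f : M →ₗ[R] M) :
    f.charpoly = X ^ 2 - C (trace R M f) * X + C (LinearMap.det f) := by
  let b := Module.finBasisOfFinrankEq R M hM
  rw [← f.charpoly_toMatrix b, Matrix.charpoly_fin_two, LinearMap.trace_eq_matrix_trace R b,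
    LinearMap.det_toMatrix]

open Polynomial in
theorem LinearMap.mul_self_of_finrank_eq_two {R M : Type*} [CommRing R] [Nontrivial R]
    [AddCommGroup M] [Module R M] [Module.Free R M] [Module.Finite R M]
    (hM : Module.finrank R M = 2) (f : M →ₗ[R] M) :
    f * f = trace R M f • f - LinearMap.det f • 1 := by
  have cayley_hamilton := f.aeval_self_charpoly
  rw [f.charpoly_of_finrank_eq_two hM] at cayley_hamilton
  simp only [map_add, map_sub, map_pow, aeval_X, aeval_C, map_mul] at cayley_hamilton
  rw [← sub_eq_zero, ← cayley_hamilton, ← Algebra.smul_def, Algebra.algebraMap_eq_smul_one, sq]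
  abel

theorem LinearMap.IsSymmetric.inner_one_add_apply_one_add_apply
    {V : Type*} [NormedAddCommGroup V] [InnerProductSpace ℝ V] {A : V →ₗ[ℝ] V}
    (hA : A.IsSymmetric) {c : ℝ} (hsq : A * A = c • 1) (v w : V) :
    ⟪(1 + A) v, (1 + A) w⟫ = 2 * ⟪A v, w⟫ + (1 + c) * ⟪v, w⟫ := by
  have hAA : ⟪A v, A w⟫ = c * ⟪v, w⟫ := by
    rw [hA v (A w), ← Module.End.mul_apply, hsq, LinearMap.smul_apply, Module.End.one_apply,
      real_inner_smul_right]
  simp only [LinearMap.add_apply, Module.End.one_apply, inner_add_left, inner_add_right, hAA,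
    hA v w]
  ring

/-- If `V` is a 2-dimensional real inner product space and `𝔸 : V → V` is a
self-adjoint endomorphism with trace zero, and `h(v, w) := 2⟨𝔸v, w⟩ + (1 − det 𝔸)⟨v, w⟩`, then
`⟨(id + 𝔸)v, (id + 𝔸)w⟩ = h(v, w)` for all `v, w`; in particular `id + 𝔸` maps `h`-unit
vectors to `⟨·,·⟩`-unit vectors. -/
theorem id_add_traceless_selfAdjoint_isometry
    (V : Type*) [NormedAddCommGroup V] [InnerProductSpace ℝ V] [FiniteDimensional ℝ V]
    (hdim : Module.finrank ℝ V = 2)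
    (A : V →ₗ[ℝ] V)
    (hsa : ∀ v w : V, ⟪A v, w⟫ = ⟪v, A w⟫)
    (htr : LinearMap.trace ℝ V A = 0)
    (h : V → V → ℝ)
    (hdef : ∀ v w : V, h v w = 2 * ⟪A v, w⟫ + (1 - LinearMap.det A) * ⟪v, w⟫) :
    (∀ v w : V, ⟪((LinearMap.id : V →ₗ[ℝ] V) + A) v, ((LinearMap.id : V →ₗ[ℝ] V) + A) w⟫ = h v w) ∧
      (∀ v : V, h v v = 1 → ‖((LinearMap.id : V →ₗ[ℝ] V) + A) v‖ = 1) := by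
  have hsq : A * A = -LinearMap.det A • 1 := by
    rw [A.mul_self_of_finrank_eq_two hdim, htr, zero_smul, zero_sub, neg_smul]
  have isometry : ∀ v w : V, ⟪(1 + A) v, (1 + A) w⟫ = h v w := fun v w => by
    rw [LinearMap.IsSymmetric.inner_one_add_apply_one_add_apply hsa hsq, hdef, sub_eq_add_neg]
  refine ⟨isometry, fun v hv => ?_⟩
  rw [← pow_eq_one_iff_of_nonneg (norm_nonneg _) two_ne_zero, ← real_inner_self_eq_norm_sq]
  exact (isometry v v).trans hv
end

section
/- Let V be a 2-dimensional real inner product space and 𝔸 : V → V a self-adjoint endomorphism with trace zero satisfying det 𝔸 > −1. Define 𝓘 := (1 + det 𝔸)⁻¹·(id − 𝔸) and the symmetric bilinear form h(v, w) := 2⟨𝔸v, w⟩ + (1 − det 𝔸)⟨v, w⟩. Then for all v, w ∈ V, h(𝓘v, 𝓘w) = ⟨v, w⟩; that is, 𝓘 is a linear isometry from (V, ⟨·,·⟩) to (V, h). -/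
/-!
By Cayley–Hamilton, a trace-free endomorphism of a rank-two module squares to `-det 𝔸 • id`.
Using this and self-adjointness, every inner product appearing in `h(v - 𝔸v, w - 𝔸w)` reduces
to `⟪v, w⟫` or `⟪𝔸v, w⟫`, and the `⟪𝔸v, w⟫` terms cancel, leaving `(1 + det 𝔸)² ⟪v, w⟫`.
-/

open scoped RealInnerProductSpace

open Polynomial in
theorem LinearMap.mul_self_eq_of_finrank_eq_two {R M : Type*} [CommRing R] [Nontrivial R]
    [AddCommGroup M] [Module R M] [Module.Free R M] (hM : Module.finrank R M = 2)
    (f : M →ₗ[R] M) : f * f = LinearMap.trace R M f • f - LinearMap.det f • 1 := by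
  have : Module.Finite R M := Module.finite_of_finrank_eq_succ hM
  let b := Module.Free.chooseBasis R M
  have hcard : Fintype.card (Module.Free.ChooseBasisIndex R M) = 2 := by
    rw [← Module.finrank_eq_card_chooseBasisIndex, hM]
  have hchar : f.charpoly = X ^ 2 - C (LinearMap.trace R M f) * X + C (LinearMap.det f) := by
    rw [← f.charpoly_toMatrix b, Matrix.charpoly_of_card_eq_two _ hcard,
      LinearMap.trace_eq_matrix_trace R b, LinearMap.det_toMatrix]
  have hCH := f.aeval_self_charpoly
  rw [hchar] at hCH
  simp only [map_add, map_sub, map_mul, aeval_X, aeval_C, Algebra.algebraMap_eq_smul_one,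
    smul_one_mul, pow_two] at hCH
  rw [← sub_eq_zero, ← hCH]
  abel

theorem LinearMap.apply_apply_eq_neg_det_smul_of_trace_eq_zero {R M : Type*} [CommRing R]
    [Nontrivial R] [AddCommGroup M] [Module R M] [Module.Free R M]
    (hM : Module.finrank R M = 2) {f : M →ₗ[R] M} (hf : LinearMap.trace R M f = 0) (v : M) :
    f (f v) = -LinearMap.det f • v := by
  simpa [hf, neg_smul] using LinearMap.congr_fun (f.mul_self_eq_of_finrank_eq_two hM) v

theorem inner_apply_sub_apply_sub {V : Type*} [NormedAddCommGroup V] [InnerProductSpace ℝ V]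
    {A : V →ₗ[ℝ] V} (hsa : ∀ v w : V, ⟪A v, w⟫ = ⟪v, A w⟫)
    {d : ℝ} (hA : ∀ v, A (A v) = -d • v) (v w : V) :
    2 * ⟪A (v - A v), w - A w⟫ + (1 - d) * ⟪v - A v, w - A w⟫ = (1 + d) ^ 2 * ⟪v, w⟫ := by
  have hAA : ⟪A v, A w⟫ = -d * ⟪v, w⟫ := by rw [hsa, hA, real_inner_smul_right]
  have hAAv : ⟪A (A v), w⟫ = -d * ⟪v, w⟫ := by rw [hA, real_inner_smul_left]
  have hAAA : ⟪A (A v), A w⟫ = -d * ⟪A v, w⟫ := by rw [hA, real_inner_smul_left, hsa]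
  simp only [map_sub, inner_sub_left, inner_sub_right, hAA, hAAv, hAAA, ← hsa v w]
  ring

theorem I_isometry_general
    (V : Type*) [NormedAddCommGroup V] [InnerProductSpace ℝ V]
    (hdim : Module.finrank ℝ V = 2)
    (A : V →ₗ[ℝ] V)
    (hsa : ∀ v w : V, ⟪A v, w⟫ = ⟪v, A w⟫)
    (htr : LinearMap.trace ℝ V A = 0)
    (hdet : LinearMap.det A > -1)
    (I : V →ₗ[ℝ] V)
    (hI : I = (1 + LinearMap.det A)⁻¹ • ((LinearMap.id : V →ₗ[ℝ] V) - A))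
    (h : V → V → ℝ)
    (hdef : ∀ v w : V, h v w = 2 * ⟪A v, w⟫ + (1 - LinearMap.det A) * ⟪v, w⟫) :
    ∀ v w : V, h (I v) (I w) = ⟪v, w⟫ := by
  intro v w
  set d := LinearMap.det A
  have hd : 1 + d ≠ 0 := by linarith
  have hA : ∀ u, A (A u) = -d • u :=
    LinearMap.apply_apply_eq_neg_det_smul_of_trace_eq_zero hdim htr
  subst hI
  calc h _ _ = (1 + d)⁻¹ ^ 2 *
        (2 * ⟪A (v - A v), w - A w⟫ + (1 - d) * ⟪v - A v, w - A w⟫) := by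
        simp only [hdef, LinearMap.smul_apply, LinearMap.sub_apply, LinearMap.id_apply, map_smul,
          real_inner_smul_left, real_inner_smul_right]
        ring
    _ = ⟪v, w⟫ := by
        rw [inner_apply_sub_apply_sub hsa hA, ← mul_assoc, ← mul_pow, inv_mul_cancel₀ hd, one_pow,
          one_mul]

/-- If `V` is a 2-dimensional real inner product space and `𝔸 : V → V` is a
self-adjoint traceless endomorphism with `det 𝔸 > −1`, and we set
`𝓘 := (1 + det 𝔸)⁻¹ • (id − 𝔸)` and `h(v, w) := 2⟨𝔸v, w⟩ + (1 − det 𝔸)⟨v, w⟩`, then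
`h(𝓘v, 𝓘w) = ⟨v, w⟩` for all `v, w ∈ V`: `𝓘` is a linear isometry from `(V, ⟨·,·⟩)` to
`(V, h)`. -/
theorem I_isometry
    (V : Type*) [NormedAddCommGroup V] [InnerProductSpace ℝ V] [FiniteDimensional ℝ V]
    (hdim : Module.finrank ℝ V = 2)
    (A : V →ₗ[ℝ] V)
    (hsa : ∀ v w : V, ⟪A v, w⟫ = ⟪v, A w⟫)
    (htr : LinearMap.trace ℝ V A = 0)
    (hdet : LinearMap.det A > -1)
    (I : V →ₗ[ℝ] V)
    (hI : I = (1 + LinearMap.det A)⁻¹ • ((LinearMap.id : V →ₗ[ℝ] V) - A))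
    (h : V → V → ℝ)
    (hdef : ∀ v w : V, h v w = 2 * ⟪A v, w⟫ + (1 - LinearMap.det A) * ⟪v, w⟫) :
    ∀ v w : V, h (I v) (I w) = ⟪v, w⟫ :=
  I_isometry_general V hdim A hsa htr hdet I hI h hdef
end
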